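/- arXiv:math/0209111 — 2 statements merged into one kernel-verified Lean document; each statement's English description precedes it below -/
import Mathlib

section
/- Let Φ : M → ℝ^n be a smooth map and σ : M → M a smooth involution with Φ ∘ σ = Φ. If p is a fixed point of σ that is a critical point of the restriction of ‖Φ‖² to the fixed point set Q = M^σ, then p is a critical point of ‖Φ‖² on all of M. -/
open scoped Manifold

/-! Since `‖Φ‖²` is `σ`-invariant and `σ` fixes `p`, the chain rule gives `d‖Φ‖²_p ∘ dσ_p = d‖Φ‖²_p`.
Hence `d‖Φ‖²_p (v + dσ_p v) = 2 d‖Φ‖²_p v`, and the criticality along `Q` kills every `v`. -/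

theorem LinearMap.eq_zero_of_comp_eq_self_of_map_add_eq_zero {𝕜 V W : Type*} [Field 𝕜]
    [NeZero (2 : 𝕜)] [AddCommGroup V] [Module 𝕜 V] [AddCommGroup W] [Module 𝕜 W]
    (L : V →ₗ[𝕜] W) (D : V →ₗ[𝕜] V) (hLD : L ∘ₗ D = L) (h : ∀ v, L (v + D v) = 0) :
    L = 0 := by
  ext v
  have h2 : (2 : 𝕜) • L v = 0 := by
    rw [two_smul, ← h v, map_add, ← LinearMap.comp_apply, hLD]
  exact (smul_eq_zero.mp h2).resolve_left two_ne_zero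

theorem mfderiv_comp_mfderiv_eq_of_comp_eq {E : Type*} [NormedAddCommGroup E] [NormedSpace ℝ E]
    {H : Type*} [TopologicalSpace H] {I : ModelWithCorners ℝ E H}
    {M : Type*} [TopologicalSpace M] [ChartedSpace H M]
    {F : Type*} [NormedAddCommGroup F] [NormedSpace ℝ F] {f : M → F} {σ : M → M} {p : M}
    (hf : MDifferentiableAt I 𝓘(ℝ, F) f p) (hσ : MDifferentiableAt I I σ p)
    (hfσ : f ∘ σ = f) (hp : σ p = p) :
    (mfderiv I 𝓘(ℝ, F) f p).comp (mfderiv I I σ p) = mfderiv I 𝓘(ℝ, F) f p := by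
  have hf' : MDifferentiableAt I 𝓘(ℝ, F) f (σ p) := by rwa [hp]
  have hchain := mfderiv_comp p hf' hσ
  rw [hfσ, hp] at hchain
  exact hchain.symm

theorem stmt_1_general {E : Type*} [NormedAddCommGroup E] [NormedSpace ℝ E]
    {H : Type*} [TopologicalSpace H] (I : ModelWithCorners ℝ E H)
    {M : Type*} [TopologicalSpace M] [ChartedSpace H M]
    {n : ℕ} (Φ : M → EuclideanSpace ℝ (Fin n))
    (hΦ : ContMDiff I 𝓘(ℝ, EuclideanSpace ℝ (Fin n)) (⊤ : ℕ∞) Φ)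
    (σ : M → M) (hσ : ContMDiff I I (⊤ : ℕ∞) σ)
    (hΦσ : ∀ x, Φ (σ x) = Φ x)
    (p : M) (hp : σ p = p)
    (D : TangentSpace I p →L[ℝ] TangentSpace I p)
    (hD : D = (mfderiv I I σ p : TangentSpace I p →L[ℝ] TangentSpace I p))
    (hcrit : ∀ v : TangentSpace I p,
      mfderiv I 𝓘(ℝ, ℝ) (fun x => ‖Φ x‖ ^ 2) p (v + D v) = 0) :
    mfderiv I 𝓘(ℝ, ℝ) (fun x => ‖Φ x‖ ^ 2) p = 0 := by
  have hf : MDifferentiableAt I 𝓘(ℝ, ℝ) (fun x => ‖Φ x‖ ^ 2) p :=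
    ((contDiff_norm_sq ℝ).contMDiff.comp hΦ).mdifferentiableAt (by simp)
  have hinv : mfderiv I 𝓘(ℝ, ℝ) (fun x => ‖Φ x‖ ^ 2) p ∘L D =
      mfderiv I 𝓘(ℝ, ℝ) (fun x => ‖Φ x‖ ^ 2) p := by
    rw [hD]
    exact mfderiv_comp_mfderiv_eq_of_comp_eq hf (hσ.mdifferentiableAt (by simp))
      (funext fun x => by simp only [Function.comp_apply, hΦσ]) hp
  exact ContinuousLinearMap.coe_injective <|
    LinearMap.eq_zero_of_comp_eq_self_of_map_add_eq_zero _ D.toLinearMap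
      (congrArg ContinuousLinearMap.toLinearMap hinv) hcrit

/-- Let Φ : M → ℝ^n be smooth and σ a smooth involution with Φ∘σ = Φ.
If p is a fixed point of σ that is a critical point of the restriction of ‖Φ‖² to
the fixed point set Q = M^σ (whose tangent space at p is {v + dσ_p v : v ∈ T_pM}),
then p is a critical point of ‖Φ‖² on all of M. -/
theorem stmt_1 {E : Type*} [NormedAddCommGroup E] [NormedSpace ℝ E]
    {H : Type*} [TopologicalSpace H] (I : ModelWithCorners ℝ E H)
    {M : Type*} [TopologicalSpace M] [ChartedSpace H M] [IsManifold I (⊤ : ℕ∞) M]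
    {n : ℕ} (Φ : M → EuclideanSpace ℝ (Fin n))
    (hΦ : ContMDiff I 𝓘(ℝ, EuclideanSpace ℝ (Fin n)) (⊤ : ℕ∞) Φ)
    (σ : M → M) (hσ : ContMDiff I I (⊤ : ℕ∞) σ) (hinvol : ∀ x, σ (σ x) = x)
    (hΦσ : ∀ x, Φ (σ x) = Φ x)
    (p : M) (hp : σ p = p)
    (D : TangentSpace I p →L[ℝ] TangentSpace I p)
    (hD : D = (mfderiv I I σ p : TangentSpace I p →L[ℝ] TangentSpace I p))
    (hcrit : ∀ v : TangentSpace I p,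
      mfderiv I 𝓘(ℝ, ℝ) (fun x => ‖Φ x‖ ^ 2) p (v + D v) = 0) :
    mfderiv I 𝓘(ℝ, ℝ) (fun x => ‖Φ x‖ ^ 2) p = 0 :=
  stmt_1_general I Φ hΦ σ hσ hΦσ p hp D hD hcrit
end

section
/- Let T be an abelian group in which every element has a square root, acting freely on a set X, with involution σ satisfying σ(t·x) = t⁻¹·σ(x), and Q = X^σ. Then there is a bijection between the set of T_ℝ-orbits in Q and the set of T-orbits in X that are preserved by σ, where T_ℝ = {t ∈ T : t² = 1}. -/
/-- The orbit equivalence relation of the 2-torsion subgroup T_ℝ = {t : t² = 1}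
on the fixed point set Q = X^σ. -/
def realOrbitSetoid (T : Type*) {X : Type*} [CommGroup T] [MulAction T X]
    (σ : X → X) : Setoid {x : X // σ x = x} where
  r a b := ∃ t : T, t * t = 1 ∧ t • (a : X) = (b : X)
  iseqv := by
    refine ⟨fun a => ⟨1, one_mul 1, one_smul _ _⟩, ?_, ?_⟩
    · rintro a b ⟨t, h1, h2⟩
      exact ⟨t, h1, by rw [← h2, ← mul_smul, h1, one_smul]⟩
    · rintro a b c ⟨t, h1, h2⟩ ⟨s, h3, h4⟩
      exact ⟨s * t, by rw [mul_mul_mul_comm, h1, h3, one_mul],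
        by rw [mul_smul, h2, h4]⟩

/-- Let T be an abelian group in which every element has a square root,
acting freely on a set X, with involution σ satisfying σ(t·x) = t⁻¹·σ(x), and
Q = X^σ. Then there is a bijection between the set of T_ℝ-orbits in Q and the set
of T-orbits in X that are preserved by σ. -/
theorem stmt_8 {T X : Type*} [CommGroup T] [MulAction T X]
    (hfree : ∀ (t : T) (x : X), t • x = x → t = 1)
    (hsq : ∀ t : T, ∃ s : T, s * s = t)
    (σ : X → X) (hinvol : ∀ x, σ (σ x) = x)
    (hanti : ∀ (t : T) (x : X), σ (t • x) = t⁻¹ • σ x) :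
    ∃ f : Quotient (realOrbitSetoid T σ) →
        {c : Quotient (MulAction.orbitRel T X) //
          ∀ x : X, Quotient.mk (MulAction.orbitRel T X) x = c →
            Quotient.mk (MulAction.orbitRel T X) (σ x) = c},
      Function.Bijective f ∧
      ∀ x : {x : X // σ x = x},
        (f (Quotient.mk (realOrbitSetoid T σ) x) : Quotient (MulAction.orbitRel T X))
          = Quotient.mk (MulAction.orbitRel T X) (x : X) := by
  classical
  -- the underlying map
  have hprop : ∀ x : {x : X // σ x = x},
      ∀ y : X, Quotient.mk (MulAction.orbitRel T X) y
        = Quotient.mk (MulAction.orbitRel T X) (x : X) →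
        Quotient.mk (MulAction.orbitRel T X) (σ y)
          = Quotient.mk (MulAction.orbitRel T X) (x : X) := by
    rintro ⟨x, hx⟩ y hy
    obtain ⟨t, ht⟩ : ∃ t : T, t • x = y := Quotient.exact hy
    refine Quotient.sound ⟨t⁻¹, ?_⟩
    show (t⁻¹ : T) • x = σ y
    rw [← ht, hanti, hx]
  let g : {x : X // σ x = x} →
      {c : Quotient (MulAction.orbitRel T X) //
        ∀ x : X, Quotient.mk (MulAction.orbitRel T X) x = c →
          Quotient.mk (MulAction.orbitRel T X) (σ x) = c} :=
    fun x => ⟨Quotient.mk (MulAction.orbitRel T X) (x : X), hprop x⟩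
  have hwd : ∀ a b : {x : X // σ x = x}, (realOrbitSetoid T σ).r a b → g a = g b := by
    rintro a b ⟨t, h1, h2⟩
    exact Subtype.ext (Quotient.sound ⟨t, show t • (b:X) = (a:X) by rw [← h2, ← mul_smul, h1, one_smul]⟩)
  refine ⟨Quotient.lift g hwd, ⟨?_, ?_⟩, fun x => rfl⟩
  · -- injective
    rintro ⟨a⟩ ⟨b⟩ h
    obtain ⟨t, ht⟩ : ∃ t : T, t • (a : X) = (b : X) :=
      Quotient.exact (congrArg Subtype.val h).symm
    refine Quotient.sound ⟨t, ?_, ht⟩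
    have hb : σ (b : X) = (b : X) := b.2
    have : σ (t • (a : X)) = t⁻¹ • (a : X) := by rw [hanti, a.2]
    rw [ht, hb] at this
    -- b = t • a = t⁻¹ • a
    have h2 : (t * t) • (a : X) = (a : X) := by
      rw [mul_smul, ht, this, ← mul_smul, mul_inv_cancel, one_smul]
    exact hfree _ _ h2
  · -- surjective
    rintro ⟨c, hc⟩
    obtain ⟨x⟩ := c
    obtain ⟨t, ht⟩ : ∃ t : T, t • x = σ x :=
      Quotient.exact (hc x rfl)
    obtain ⟨s, hs⟩ := hsq t
    have hfix : σ (s • x) = s • x := by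
      rw [hanti, ← ht, ← mul_smul, ← hs]
      rw [inv_mul_cancel_left]
    refine ⟨Quotient.mk _ (⟨s • x, hfix⟩ : {x : X // σ x = x}), ?_⟩
    refine Subtype.ext (Quotient.sound ?_)
    exact ⟨s, rfl⟩
end
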